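/- arXiv:2502.00364 — 2 statements merged into one kernel-verified Lean document; each statement's English description precedes it below -/
import Mathlib

section
/- For a CS-path endpoint with θ ∈ (0, π) and āθ < L, the polar angle λ of the endpoint satisfies λ ≤ θ ≤ λ + π; equivalently θ − λ ∈ [0, π]. -/
open Real Complex

/-!
Rotating the endpoint `F` back by `θ` gives `F e^{-iθ} = (L - āθ + ā sin θ) - i ā (1 - cos θ)`,
which lies in the closed lower half-plane, so the polar angle of `F` does not exceed `θ`.
Since `F` itself lies in the open upper half-plane, its polar angle is positive, and
`θ < π` gives the other bound.
-/

namespace Complex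

lemma norm_mul_sin_arg_sub (z : ℂ) (θ : ℝ) :
    ‖z‖ * Real.sin (arg z - θ) = z.im * Real.cos θ - z.re * Real.sin θ := by
  rw [Real.sin_sub, ← norm_mul_sin_arg, ← norm_mul_cos_arg]
  ring

lemma arg_le_of_im_mul_cos_le {z : ℂ} {θ : ℝ} (hz : 0 < z.im) (hθ : 0 ≤ θ)
    (h : z.im * Real.cos θ ≤ z.re * Real.sin θ) : arg z ≤ θ := by
  by_contra! hlt
  have harg_lt_pi : arg z < π := arg_lt_pi_iff.mpr (Or.inr hz.ne')
  have hsin : 0 < Real.sin (arg z - θ) := Real.sin_pos_of_pos_of_lt_pi (by linarith) (by linarith)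
  have hnorm : 0 < ‖z‖ := norm_pos_iff.mpr fun h0 => by simp [h0] at hz
  nlinarith [norm_mul_sin_arg_sub z θ, mul_pos hnorm hsin]

end Complex

/-- For a CS-path endpoint with `θ ∈ (0, π)` and `ā θ < L`, the polar angle `λ`
of the endpoint satisfies `λ ≤ θ ≤ λ + π`. -/
theorem cspath_polar_angle_bounds (L abar θ : ℝ) (habar : 0 < abar)
    (hθ0 : 0 < θ) (hθπ : θ < Real.pi) (h : abar * θ < L) :
    let Fx : ℝ := abar * Real.sin θ + (L - abar * θ) * Real.cos θ
    let Fy : ℝ := abar * (1 - Real.cos θ) + (L - abar * θ) * Real.sin θ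
    let lam : ℝ := Complex.arg ((Fx : ℂ) + (Fy : ℂ) * Complex.I)
    lam ≤ θ ∧ θ ≤ lam + Real.pi := by
  intro Fx Fy lam
  set z : ℂ := (Fx : ℂ) + (Fy : ℂ) * Complex.I
  have hre : z.re = Fx := by simp [z]
  have him : z.im = Fy := by simp [z]
  have hsin : 0 < Real.sin θ := Real.sin_pos_of_pos_of_lt_pi hθ0 hθπ
  have hcos : Real.cos θ ≤ 1 := Real.cos_le_one θ
  have hFy : 0 < Fy := by
    have : 0 < (L - abar * θ) * Real.sin θ := mul_pos (by linarith) hsin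
    simp only [Fy]
    nlinarith
  have hcross : Fy * Real.cos θ - Fx * Real.sin θ = abar * (Real.cos θ - 1) := by
    simp only [Fx, Fy]
    linear_combination -abar * Real.sin_sq_add_cos_sq θ
  have hz_im : 0 < z.im := him ▸ hFy
  have hlam_nonneg : 0 ≤ lam := arg_nonneg_iff.mpr hz_im.le
  refine ⟨arg_le_of_im_mul_cos_le hz_im hθ0.le ?_, by linarith⟩
  rw [hre, him]
  nlinarith
end

section
/- If the target lies on the boundary of the CBEZ, its distance to the shifted pursuer position equals the cochleoid radius: with P' = P − μR(cos ψ_T, sin ψ_T) and λ' the polar angle of T − P', membership of T in the closed CBEZ complement is characterized by ‖T − P'‖ ≥ (L/(λ' − ψ_P))·sin(λ' − ψ_P), and this constraint function is invariant under simultaneous rotation of T, ψ_T, and ψ_P about P by any angle φ. -/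
open Real Complex

/-- The shifted pursuer position for the CBEZ: `P' = P - μ R e^{i ψ_T}`. -/
noncomputable def shiftedPursuer (P : ℂ) (μ R ψT : ℝ) : ℂ :=
  P - (μ * R : ℂ) * Complex.exp ((ψT : ℂ) * Complex.I)

/-- The relative polar angle `α = λ' - ψ_P` of the target w.r.t. the shifted
pursuer position, reduced to `(-π, π]`. -/
noncomputable def relAngle (P T : ℂ) (μ R ψT ψP : ℝ) : ℝ :=
  Complex.arg ((T - shiftedPursuer P μ R ψT) * Complex.exp (-(ψP : ℂ) * Complex.I))

/-- The CBEZ: C-reachability region of radius `L (sin α)/α` about `P'`. -/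
noncomputable def CBEZ (P : ℂ) (μ R ψT ψP L : ℝ) : Set ℂ :=
  {T : ℂ | ‖T - shiftedPursuer P μ R ψT‖
    < L / relAngle P T μ R ψT ψP * Real.sin (relAngle P T μ R ψT ψP)}

/-! Rotating `T`, `ψ_T` and `ψ_P` about `P` by `φ` multiplies `T - P'` by `e^{iφ}`, which preserves
its norm, and the factor cancels against `e^{-iφ}` in the relative angle. -/

theorem notMem_CBEZ_iff (P T : ℂ) (μ R ψT ψP L : ℝ) :
    T ∉ CBEZ P μ R ψT ψP L ↔
      ‖T - shiftedPursuer P μ R ψT‖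
        ≥ L / relAngle P T μ R ψT ψP * Real.sin (relAngle P T μ R ψT ψP) :=
  not_lt (α := ℝ)

theorem rotate_sub_shiftedPursuer (P T : ℂ) (μ R ψT φ : ℝ) :
    (T - P) * exp (φ * I) + P - shiftedPursuer P μ R (ψT + φ)
      = (T - shiftedPursuer P μ R ψT) * exp (φ * I) := by
  simp only [shiftedPursuer, ofReal_add, add_mul, Complex.exp_add]
  ring

theorem norm_rotate_sub_shiftedPursuer (P T : ℂ) (μ R ψT φ : ℝ) :
    ‖(T - P) * exp (φ * I) + P - shiftedPursuer P μ R (ψT + φ)‖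
      = ‖T - shiftedPursuer P μ R ψT‖ := by
  rw [rotate_sub_shiftedPursuer, norm_mul, norm_exp_ofReal_mul_I, mul_one]

theorem relAngle_rotate (P T : ℂ) (μ R ψT ψP φ : ℝ) :
    relAngle P ((T - P) * exp (φ * I) + P) μ R (ψT + φ) (ψP + φ) = relAngle P T μ R ψT ψP := by
  have hcancel : exp (φ * I) * exp (-((ψP + φ : ℝ) : ℂ) * I) = exp (-(ψP : ℂ) * I) := by
    rw [← Complex.exp_add]
    push_cast
    ring_nf
  rw [relAngle, relAngle, rotate_sub_shiftedPursuer, mul_assoc, hcancel]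

theorem cbez_constraint_rotation_invariant_general (P T : ℂ) (μ R ψT ψP L φ : ℝ) :
    (T ∉ CBEZ P μ R ψT ψP L ↔
      ‖T - shiftedPursuer P μ R ψT‖
        ≥ L / relAngle P T μ R ψT ψP * Real.sin (relAngle P T μ R ψT ψP)) ∧
    (‖((T - P) * Complex.exp ((φ : ℂ) * Complex.I) + P)
        - shiftedPursuer P μ R (ψT + φ)‖
      = ‖T - shiftedPursuer P μ R ψT‖) ∧
    (relAngle P ((T - P) * Complex.exp ((φ : ℂ) * Complex.I) + P) μ R (ψT + φ) (ψP + φ)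
      = relAngle P T μ R ψT ψP) ∧
    (((T - P) * Complex.exp ((φ : ℂ) * Complex.I) + P) ∉ CBEZ P μ R (ψT + φ) (ψP + φ) L ↔
      T ∉ CBEZ P μ R ψT ψP L) := by
  refine ⟨notMem_CBEZ_iff P T μ R ψT ψP L, norm_rotate_sub_shiftedPursuer P T μ R ψT φ,
    relAngle_rotate P T μ R ψT ψP φ, ?_⟩
  simp only [notMem_CBEZ_iff, norm_rotate_sub_shiftedPursuer, relAngle_rotate]

/-- Membership in the closed complement of the CBEZ is characterized by
`‖T - P'‖ ≥ (L/(λ' - ψ_P)) sin(λ' - ψ_P)`, and this constraint is invariant under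
simultaneous rotation of `T`, `ψ_T` and `ψ_P` about `P` by any angle `φ`. -/
theorem cbez_constraint_rotation_invariant (P T : ℂ) (μ R ψT ψP L φ : ℝ)
    (hμ : 0 < μ) (hR : 0 < R) (hL : 0 < L) :
    (T ∉ CBEZ P μ R ψT ψP L ↔
      ‖T - shiftedPursuer P μ R ψT‖
        ≥ L / relAngle P T μ R ψT ψP * Real.sin (relAngle P T μ R ψT ψP)) ∧
    (‖((T - P) * Complex.exp ((φ : ℂ) * Complex.I) + P)
        - shiftedPursuer P μ R (ψT + φ)‖
      = ‖T - shiftedPursuer P μ R ψT‖) ∧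
    (relAngle P ((T - P) * Complex.exp ((φ : ℂ) * Complex.I) + P) μ R (ψT + φ) (ψP + φ)
      = relAngle P T μ R ψT ψP) ∧
    (((T - P) * Complex.exp ((φ : ℂ) * Complex.I) + P) ∉ CBEZ P μ R (ψT + φ) (ψP + φ) L ↔
      T ∉ CBEZ P μ R ψT ψP L) :=
  cbez_constraint_rotation_invariant_general P T μ R ψT ψP L φ
end
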